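/- arXiv:2212.07553 — 2 statements merged into one kernel-verified Lean document; each statement's English description precedes it below -/
import Mathlib

section
/- Let W be a real n1 × n0 matrix with n1 ≤ n0 and rank(W) = n1 (full row rank), and let P = Wᵀ (W Wᵀ)⁻¹ be its Moore–Penrose pseudoinverse. Let C be a real m × n0 matrix and d ∈ ℝ^m be such that the polyhedron Poly(C, d) ⊆ ℝ^{n0} is nonempty and bounded. Then for every d' ∈ ℝ^m, the polyhedron Poly(C P, d') = { y ∈ ℝ^{n1} : C P y ≤ d' } is bounded. -/
open Matrix

/-- If the recession cone of `A` is trivial, every polyhedron `{y | A y ≤ d'}` is bounded. -/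
lemma aux_bounded_of_trivial_recession {n m : ℕ} (A : Matrix (Fin m) (Fin n) ℝ)
    (h : ∀ v : Fin n → ℝ, A.mulVec v ≤ 0 → v = 0) (d' : Fin m → ℝ) :
    Bornology.IsBounded {y : Fin n → ℝ | A.mulVec y ≤ d'} := by
  by_contra hub
  have hseq : ∀ k : ℕ, ∃ y : Fin n → ℝ, A.mulVec y ≤ d' ∧ (k : ℝ) + 1 ≤ ‖y‖ := by
    intro k
    by_contra hc
    push_neg at hc
    exact hub (isBounded_iff_forall_norm_le.mpr ⟨(k : ℝ) + 1, fun y hy => (hc y hy).le⟩)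
  choose y hy hny using hseq
  have hpos : ∀ k, 0 < ‖y k‖ := fun k =>
    lt_of_lt_of_le (by positivity) (hny k)
  set u : ℕ → (Fin n → ℝ) := fun k => (‖y k‖)⁻¹ • y k with hu_def
  have hu : ∀ k, u k ∈ Metric.sphere (0 : Fin n → ℝ) 1 := by
    intro k
    rw [mem_sphere_zero_iff_norm, hu_def, norm_smul, norm_inv, norm_norm,
      inv_mul_cancel₀ (hpos k).ne']
  obtain ⟨v, hv, φ, hφ, hconv⟩ :=
    (isCompact_sphere (0 : Fin n → ℝ) 1).tendsto_subseq hu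
  have hv1 : ‖v‖ = 1 := mem_sphere_zero_iff_norm.mp hv
  have hv0 : v ≠ 0 := by
    intro h0; rw [h0, norm_zero] at hv1; norm_num at hv1
  apply hv0
  apply h
  intro i
  have hcont : Continuous fun x : Fin n → ℝ => A.mulVec x i :=
    (continuous_apply i).comp (A.mulVecLin.continuous_of_finiteDimensional)
  have htend1 : Filter.Tendsto (fun k => A.mulVec (u (φ k)) i) Filter.atTop
      (nhds (A.mulVec v i)) := (hcont.tendsto v).comp hconv
  have hnormtend : Filter.Tendsto (fun k => ‖y (φ k)‖) Filter.atTop Filter.atTop := by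
    apply Filter.tendsto_atTop_mono (fun k => le_trans ?_ (hny (φ k)))
    · exact Filter.tendsto_atTop_add_const_right _ 1 tendsto_natCast_atTop_atTop
    · have h6 : k ≤ φ k := hφ.le_apply
      have h7 : (k : ℝ) ≤ (φ k : ℝ) := Nat.cast_le.mpr h6
      linarith
  have htend2 : Filter.Tendsto (fun k => (‖y (φ k)‖)⁻¹ * d' i) Filter.atTop (nhds 0) := by
    simpa using (tendsto_inv_atTop_zero.comp hnormtend).mul_const (d' i)
  have hle : ∀ k, A.mulVec (u (φ k)) i ≤ (‖y (φ k)‖)⁻¹ * d' i := by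
    intro k
    have h1 : A.mulVec (u (φ k)) i = (‖y (φ k)‖)⁻¹ * A.mulVec (y (φ k)) i := by
      rw [hu_def]
      simp [Matrix.mulVec_smul]
    rw [h1]
    exact mul_le_mul_of_nonneg_left (hy (φ k) i) (inv_nonneg.mpr (hpos (φ k)).le)
  have := le_of_tendsto_of_tendsto' htend1 htend2 hle
  simpa using this

/-- Fat weight matrix case of the paper's Proposition: if `W` has full row rank `n1 ≤ n0`
with Moore–Penrose pseudoinverse `P = Wᵀ (W Wᵀ)⁻¹`, and the polyhedron `Poly(C, d)` is
nonempty and bounded, then for every offset `d'` the polyhedron `Poly(C P, d')` is bounded. -/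
theorem fat_weight_adaptive_polytope_bounded
    (n0 n1 m : ℕ) (hle : n1 ≤ n0)
    (W : Matrix (Fin n1) (Fin n0) ℝ) (hrank : W.rank = n1)
    (P : Matrix (Fin n0) (Fin n1) ℝ) (hP : P = Wᵀ * (W * Wᵀ)⁻¹)
    (C : Matrix (Fin m) (Fin n0) ℝ) (d : Fin m → ℝ)
    (hne : ({x : Fin n0 → ℝ | C.mulVec x ≤ d}).Nonempty)
    (hbd : Bornology.IsBounded {x : Fin n0 → ℝ | C.mulVec x ≤ d}) :
    ∀ d' : Fin m → ℝ,
      Bornology.IsBounded {y : Fin n1 → ℝ | (C * P).mulVec y ≤ d'} := by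
  -- Step 1: trivial recession cone for C
  obtain ⟨x₀, hx₀⟩ := hne
  obtain ⟨R, hR⟩ := isBounded_iff_forall_norm_le.mp hbd
  have hrec : ∀ v : Fin n0 → ℝ, C.mulVec v ≤ 0 → v = 0 := by
    intro v hv
    by_contra hv0
    have hvn : 0 < ‖v‖ := norm_pos_iff.mpr hv0
    set t : ℝ := (R + ‖x₀‖ + 1) / ‖v‖ with ht_def
    have hxR : ‖x₀‖ ≤ R := hR x₀ hx₀
    have ht : 0 < t := div_pos (by linarith [norm_nonneg x₀]) hvn
    have hmem : x₀ + t • v ∈ {x : Fin n0 → ℝ | C.mulVec x ≤ d} := by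
      intro i
      have : C.mulVec (x₀ + t • v) i = C.mulVec x₀ i + t * C.mulVec v i := by
        rw [Matrix.mulVec_add, Matrix.mulVec_smul]
        simp
      rw [this]
      have h1 : t * C.mulVec v i ≤ 0 :=
        mul_nonpos_of_nonneg_of_nonpos ht.le (hv i)
      have h2 : C.mulVec x₀ i ≤ d i := hx₀ i
      linarith
    have hb := hR _ hmem
    have h3 : ‖t • v‖ ≤ ‖x₀ + t • v‖ + ‖x₀‖ := by
      have := norm_sub_le (x₀ + t • v) x₀
      simpa using this
    have h4 : ‖t • v‖ = t * ‖v‖ := by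
      rw [norm_smul, Real.norm_of_nonneg ht.le]
    have h5 : t * ‖v‖ = R + ‖x₀‖ + 1 := by
      rw [ht_def, div_mul_cancel₀ _ hvn.ne']
    linarith
  -- Step 2: W * P = 1
  have hr2 : (W * Wᵀ).rank = n1 := by rw [Matrix.rank_self_mul_transpose, hrank]
  have hsurj : Function.Surjective (W * Wᵀ).mulVec := by
    have : LinearMap.range (W * Wᵀ).mulVecLin = ⊤ := by
      apply Submodule.eq_top_of_finrank_eq
      rw [← Matrix.rank, hr2]
      simp [Module.finrank_pi]
    have hsl := LinearMap.range_eq_top.mp this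
    intro x
    obtain ⟨z, hz⟩ := hsl x
    exact ⟨z, by rw [← Matrix.mulVecLin_apply]; exact hz⟩
  have hUnit : IsUnit (W * Wᵀ) := Matrix.mulVec_surjective_iff_isUnit.mp hsurj
  have hWP : W * P = 1 := by
    rw [hP, ← Matrix.mul_assoc]
    exact Matrix.mul_nonsing_inv _ ((Matrix.isUnit_iff_isUnit_det _).mp hUnit)
  -- Step 3: trivial recession cone for C * P
  intro d'
  apply aux_bounded_of_trivial_recession
  intro v hv
  have h1 : C.mulVec (P.mulVec v) ≤ 0 := by
    rwa [Matrix.mulVec_mulVec]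
  have h2 : P.mulVec v = 0 := hrec _ h1
  have h3 : W.mulVec (P.mulVec v) = 0 := by rw [h2, Matrix.mulVec_zero]
  rwa [Matrix.mulVec_mulVec, hWP, Matrix.one_mulVec] at h3
end

section
/- Let C be a real m × n matrix and d ∈ ℝ^m. If the polyhedron Poly(C, d) = { x ∈ ℝⁿ : C x ≤ d } is nonempty and unbounded, then there exists a nonzero vector v ∈ ℝⁿ with C v ≤ 0; moreover, for any such v, every x ∈ Poly(C, d) and every α ≥ 0 satisfy x + α v ∈ Poly(C, d). -/
/-!
An unbounded polyhedron contains points `x k` with `‖x k‖ → ∞`. By compactness of the unit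
sphere the directions `x k / ‖x k‖` have a limit point `v ≠ 0`, and dividing `C x k ≤ d` by
`‖x k‖` and passing to the limit gives `C v ≤ 0`.
-/

open Matrix Filter Topology Bornology

section AsymptoticDirection

variable {E : Type*} [NormedAddCommGroup E] [NormedSpace ℝ E]

theorem exists_tendsto_normalize_of_not_isBounded [ProperSpace E] {s : Set E}
    (hs : ¬ IsBounded s) :
    ∃ v : E, ‖v‖ = 1 ∧ ∃ x : ℕ → E, (∀ k, x k ∈ s) ∧ Tendsto (‖x ·‖) atTop atTop ∧
      Tendsto (fun k => ‖x k‖⁻¹ • x k) atTop (𝓝 v) := by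
  have hlarge : ∀ r : ℝ, ∃ x ∈ s, r < ‖x‖ := by
    simpa [isBounded_iff_forall_norm_le] using hs
  choose x hxs hxk using fun k : ℕ => hlarge k
  have hpos : ∀ k, 0 < ‖x k‖ := fun k => (Nat.cast_nonneg k).trans_lt (hxk k)
  have hsphere : ∀ k, ‖x k‖⁻¹ • x k ∈ Metric.sphere (0 : E) 1 := fun k => by
    simp [norm_smul, (hpos k).ne']
  obtain ⟨v, hv, φ, hφ, hlim⟩ := (isCompact_sphere (0 : E) 1).tendsto_subseq hsphere
  have hnorm : Tendsto (‖x ·‖) atTop atTop :=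
    tendsto_atTop_mono (fun k => (hxk k).le) tendsto_natCast_atTop_atTop
  exact ⟨v, by simpa using hv, x ∘ φ, fun k => hxs (φ k),
    hnorm.comp hφ.tendsto_atTop, hlim⟩

variable {F : Type*} [NormedAddCommGroup F] [NormedSpace ℝ F] [PartialOrder F]
  [OrderClosedTopology F] [PosSMulMono ℝ F]

theorem ContinuousLinearMap.map_le_zero_of_tendsto_normalize (φ : E →L[ℝ] F) {c : F}
    {x : ℕ → E} {v : E} (hφx : ∀ k, φ (x k) ≤ c) (hx : Tendsto (‖x ·‖) atTop atTop)
    (hv : Tendsto (fun k => ‖x k‖⁻¹ • x k) atTop (𝓝 v)) : φ v ≤ 0 := by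
  have hφv : Tendsto (fun k => ‖x k‖⁻¹ • φ (x k)) atTop (𝓝 (φ v)) := by
    simpa only [Function.comp_def, map_smul] using (φ.continuous.tendsto v).comp hv
  have hc : Tendsto (fun k => ‖x k‖⁻¹ • c) atTop (𝓝 0) := by
    simpa using hx.inv_tendsto_atTop.smul_const c
  exact le_of_tendsto_of_tendsto' hφv hc fun k =>
    smul_le_smul_of_nonneg_left (hφx k) (inv_nonneg.2 (norm_nonneg _))

end AsymptoticDirection

theorem Matrix.mulVec_add_smul_le {R m n : Type*} [CommRing R] [PartialOrder R]
    [IsOrderedRing R] [Fintype n] {C : Matrix m n R} {d : m → R} {x v : n → R} {α : R}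
    (hx : C *ᵥ x ≤ d) (hv : C *ᵥ v ≤ 0) (hα : 0 ≤ α) : C *ᵥ (x + α • v) ≤ d := by
  rw [mulVec_add, mulVec_smul]
  exact add_le_of_le_of_nonpos hx (smul_nonpos_of_nonneg_of_nonpos hα hv)

theorem unbounded_polyhedron_recession_direction_general
    (n m : ℕ) (C : Matrix (Fin m) (Fin n) ℝ) (d : Fin m → ℝ)
    (hub : ¬ Bornology.IsBounded {x : Fin n → ℝ | C.mulVec x ≤ d}) :
    (∃ v : Fin n → ℝ, v ≠ 0 ∧ C.mulVec v ≤ 0) ∧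
    (∀ v : Fin n → ℝ, C.mulVec v ≤ 0 →
      ∀ x ∈ {x : Fin n → ℝ | C.mulVec x ≤ d}, ∀ α : ℝ, 0 ≤ α →
        x + α • v ∈ {x : Fin n → ℝ | C.mulVec x ≤ d}) := by
  obtain ⟨v, hv, x, hxs, hx, hxv⟩ := exists_tendsto_normalize_of_not_isBounded hub
  refine ⟨⟨v, norm_ne_zero_iff.1 (hv ▸ one_ne_zero), ?_⟩,
    fun w hw y hy α hα => mulVec_add_smul_le hy hw hα⟩
  exact C.mulVecLin.toContinuousLinearMap.map_le_zero_of_tendsto_normalize hxs hx hxv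

/-- Recession direction of an unbounded polyhedron: if `Poly(C, d)` is nonempty and
unbounded, there is a nonzero `v` with `C v ≤ 0`; moreover for any such `v`, every
`x ∈ Poly(C, d)` and every `α ≥ 0` satisfy `x + α v ∈ Poly(C, d)`. -/
theorem unbounded_polyhedron_recession_direction
    (n m : ℕ) (C : Matrix (Fin m) (Fin n) ℝ) (d : Fin m → ℝ)
    (hne : ({x : Fin n → ℝ | C.mulVec x ≤ d}).Nonempty)
    (hub : ¬ Bornology.IsBounded {x : Fin n → ℝ | C.mulVec x ≤ d}) :
    (∃ v : Fin n → ℝ, v ≠ 0 ∧ C.mulVec v ≤ 0) ∧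
    (∀ v : Fin n → ℝ, C.mulVec v ≤ 0 →
      ∀ x ∈ {x : Fin n → ℝ | C.mulVec x ≤ d}, ∀ α : ℝ, 0 ≤ α →
        x + α • v ∈ {x : Fin n → ℝ | C.mulVec x ≤ d}) :=
  unbounded_polyhedron_recession_direction_general n m C d hub
end
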